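/- For x > 0, the maximum over t ∈ [0, √2] of the function t²/4 − (max(t − x, 0))²/2 equals x²/2 if 0 < x ≤ 1/√2, and equals 1/2 − (max(√2 − x, 0))²/2 if x > 1/√2. -/

import Mathlib

/-! On `t ≤ x` the function `g x` is `t²/4`, and on `t ≥ x` it is the downward parabola
`x²/2 - (t - 2x)²/4` with vertex at `t = 2x`. Hence `g x` increases on `[0, 2x]` and never
exceeds `x²/2` for `t ≥ 0`, so its maximum over `[0, b]` is attained at `min b (2x)`.
For `b = √2` this is `2x` when `x ≤ 1/√2`, and the endpoint `√2` otherwise. -/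

noncomputable def g (x t : ℝ) : ℝ := t^2 / 4 - (max (t - x) 0)^2 / 2

open Set

lemma g_eq_of_le {x t : ℝ} (h : t ≤ x) : g x t = t ^ 2 / 4 := by
  simp [g, max_eq_right (sub_nonpos.2 h)]

lemma g_eq_of_ge {x t : ℝ} (h : x ≤ t) : g x t = x ^ 2 / 2 - (t - 2 * x) ^ 2 / 4 := by
  rw [g, max_eq_left (sub_nonneg.2 h)]
  ring

lemma g_two_mul {x : ℝ} (hx : 0 ≤ x) : g x (2 * x) = x ^ 2 / 2 := by
  rw [g_eq_of_ge (by linarith)]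
  ring

lemma g_le_sq_div_two {x t : ℝ} (ht : 0 ≤ t) : g x t ≤ x ^ 2 / 2 := by
  rcases le_total t x with h | h
  · rw [g_eq_of_le h]
    nlinarith
  · rw [g_eq_of_ge h]
    nlinarith [sq_nonneg (t - 2 * x)]

lemma monotoneOn_g (x : ℝ) : MonotoneOn (g x) (Icc 0 (2 * x)) := by
  rintro s ⟨hs, -⟩ t ⟨-, ht⟩ hst
  rcases le_total t x with htx | hxt
  · rw [g_eq_of_le htx, g_eq_of_le (hst.trans htx)]
    nlinarith
  rcases le_total s x with hsx | hxs
  · rw [g_eq_of_le hsx, g_eq_of_ge hxt]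
    nlinarith
  · rw [g_eq_of_ge hxs, g_eq_of_ge hxt]
    nlinarith

lemma g_le_g_min_two_mul {x t : ℝ} (hx : 0 ≤ x) (ht : 0 ≤ t) :
    g x t ≤ g x (min t (2 * x)) := by
  rcases le_total t (2 * x) with h | h
  · rw [min_eq_left h]
  · rw [min_eq_right h, g_two_mul hx]
    exact g_le_sq_div_two ht

lemma isGreatest_image_g_Icc {x b : ℝ} (hx : 0 ≤ x) (hb : 0 ≤ b) :
    IsGreatest (g x '' Icc 0 b) (g x (min b (2 * x))) := by
  have hmem : ∀ {t}, 0 ≤ t → min t (2 * x) ∈ Icc 0 (2 * x) :=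
    fun ht ↦ ⟨le_min ht (by linarith), min_le_right _ _⟩
  refine ⟨⟨_, ⟨le_min hb (by linarith), min_le_left _ _⟩, rfl⟩, ?_⟩
  rintro _ ⟨t, ⟨ht, htb⟩, rfl⟩
  calc g x t ≤ g x (min t (2 * x)) := g_le_g_min_two_mul hx ht
    _ ≤ g x (min b (2 * x)) :=
      monotoneOn_g x (hmem ht) (hmem hb) (min_le_min_right _ htb)

lemma g_sqrt_two (x : ℝ) : g x √2 = 1 / 2 - (max (√2 - x) 0) ^ 2 / 2 := by
  rw [g, Real.sq_sqrt zero_le_two]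
  ring

theorem stmt_5 (x : ℝ) (hx : 0 < x) :
    (x ≤ (Real.sqrt 2)⁻¹ →
      IsGreatest (g x '' Set.Icc 0 (Real.sqrt 2)) (x^2 / 2)) ∧
    ((Real.sqrt 2)⁻¹ < x →
      IsGreatest (g x '' Set.Icc 0 (Real.sqrt 2))
        (1/2 - (max (Real.sqrt 2 - x) 0)^2 / 2)) := by
  have hmax := isGreatest_image_g_Icc hx.le (Real.sqrt_nonneg 2)
  rw [← Real.sqrt_div_self, le_div_iff₀ two_pos, div_lt_iff₀ two_pos, mul_comm x]
  constructor
  · intro h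
    rwa [min_eq_right h, g_two_mul hx.le] at hmax
  · intro h
    rwa [min_eq_left h.le, g_sqrt_two] at hmax
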